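/- arXiv:2301.05801 — 3 statements merged into one kernel-verified Lean document; each statement's English description precedes it below -/
import Mathlib

section
/- Let p, q ≥ 0 be integers and z_{-q},…,z_{-1},z_0,z_1,…,z_p ∈ ℂ with Re(z_k) ≥ 1 for all −q ≤ k ≤ p, Re(z_p) > 1 and Re(z_{-q}) > 1. Then ζ_{(p+1,1^q)}(z) = Σ_{j=0}^{q} (−1)^j ζ*(z_{−j}, z_{−j+1}, …, z_{−1}, z_0, z_1, …, z_p) · ζ(z_{−j−1}, z_{−j−2}, …, z_{−q}), where the factor ζ(z_{−j−1},…,z_{−q}) is interpreted as 1 when j = q. -/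
lemma norm_pnat_cpow (n : ℕ+) (w : ℂ) : ‖((n : ℕ) : ℂ) ^ (-w)‖ = ((n : ℕ) : ℝ) ^ (-w.re) := by
  have h0 : (0:ℝ) < ((n : ℕ) : ℝ) := by exact_mod_cast n.pos
  rw [show ((n : ℕ) : ℂ) = ((((n:ℕ):ℝ)) : ℂ) by norm_cast]
  rw [Complex.norm_cpow_eq_rpow_re_of_pos h0]
  simp

lemma summable_pnat_rpow {e : ℝ} (he : e < -1) : Summable (fun n : ℕ+ => ((n : ℕ) : ℝ) ^ e) := by
  have h : Summable (fun n : ℕ => (n : ℝ) ^ e) := Real.summable_nat_rpow.mpr he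
  exact h.comp_injective PNat.coe_injective

lemma summable_pi_rpow {r : ℕ} {e : ℝ} (he : e < -1) :
    Summable (fun m : Fin r → ℕ+ => ∏ i, ((m i : ℕ) : ℝ) ^ e) := by
  induction r with
  | zero =>
      have : Finite (Fin 0 → ℕ+) := by infer_instance
      exact Summable.of_finite
  | succ n ih =>
      have h := (summable_pnat_rpow he).mul_of_nonneg ih
        (fun x => by positivity) (fun x => by positivity)
      have := h.comp_injective (Fin.consEquiv fun _ : Fin (n + 1) => ℕ+).symm.injective
      apply this.congr
      intro m
      simp [Fin.consEquiv, Fin.prod_univ_succ, Fin.tail]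

lemma chain_bound {r : ℕ} (m : Fin r → ℕ+) (σ : Fin r → ℝ) (h1 : ∀ i, 1 ≤ σ i)
    (i₀ : Fin r) (hmax : ∀ i, m i ≤ m i₀) (δ : ℝ) (hδ : 0 < δ) (h2 : 1 + δ ≤ σ i₀) :
    ∏ i, ((m i : ℕ) : ℝ) ^ (-σ i) ≤ ∏ i, ((m i : ℕ) : ℝ) ^ (-(1 + δ / r)) := by
  have hr : 0 < r := i₀.pos
  have h1m : ∀ i, (1:ℝ) ≤ ((m i : ℕ) : ℝ) := fun i => by exact_mod_cast (m i).one_le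
  have h0m : ∀ i, (0:ℝ) < ((m i : ℕ) : ℝ) := fun i => by exact_mod_cast (m i).pos
  have step1 : ∏ i, ((m i : ℕ) : ℝ) ^ (-σ i)
      ≤ (∏ i, ((m i : ℕ) : ℝ) ^ (-1 : ℝ)) * ((m i₀ : ℕ) : ℝ) ^ (-δ) := by
    have expand : ∀ i, ((m i : ℕ) : ℝ) ^ (-σ i)
        = ((m i : ℕ) : ℝ) ^ (-1 : ℝ) * ((m i : ℕ) : ℝ) ^ (-(σ i - 1)) := by
      intro i
      rw [← Real.rpow_add (h0m i)]
      ring_nf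
    rw [Finset.prod_congr rfl (fun i _ => expand i), Finset.prod_mul_distrib]
    apply mul_le_mul_of_nonneg_left _ (Finset.prod_nonneg (fun i _ => by positivity))
    calc ∏ i, ((m i : ℕ) : ℝ) ^ (-(σ i - 1))
        = ((m i₀ : ℕ) : ℝ) ^ (-(σ i₀ - 1)) * ∏ i ∈ Finset.univ.erase i₀, ((m i : ℕ) : ℝ) ^ (-(σ i - 1)) := by
          exact (Finset.mul_prod_erase Finset.univ _ (Finset.mem_univ i₀)).symm
      _ ≤ ((m i₀ : ℕ) : ℝ) ^ (-δ) * 1 := by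
          apply mul_le_mul
          · exact Real.rpow_le_rpow_of_exponent_le (h1m i₀) (by linarith)
          · exact Finset.prod_le_one (fun i _ => by positivity)
              (fun i _ => Real.rpow_le_one_of_one_le_of_nonpos (h1m i) (by linarith [h1 i]))
          · exact Finset.prod_nonneg (fun i _ => by positivity)
          · positivity
      _ = ((m i₀ : ℕ) : ℝ) ^ (-δ) := mul_one _
  have step2 : ((m i₀ : ℕ) : ℝ) ^ (-δ) ≤ ∏ i, ((m i : ℕ) : ℝ) ^ (-(δ / r)) := by
    have : ((m i₀ : ℕ) : ℝ) ^ (-δ) = ∏ _i : Fin r, ((m i₀ : ℕ) : ℝ) ^ (-(δ / r)) := by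
      rw [Finset.prod_const, ← Real.rpow_natCast (((m i₀ : ℕ) : ℝ) ^ (-(δ/r))), ← Real.rpow_mul (h0m i₀).le]
      congr 1
      field_simp
      simp
    rw [this]
    apply Finset.prod_le_prod (fun i _ => by positivity)
    intro i _
    exact Real.rpow_le_rpow_of_nonpos (h0m i) (by exact_mod_cast hmax i) (neg_nonpos.mpr (by positivity))
  calc ∏ i, ((m i : ℕ) : ℝ) ^ (-σ i)
      ≤ (∏ i, ((m i : ℕ) : ℝ) ^ (-1 : ℝ)) * ((m i₀ : ℕ) : ℝ) ^ (-δ) := step1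
    _ ≤ (∏ i, ((m i : ℕ) : ℝ) ^ (-1 : ℝ)) * ∏ i, ((m i : ℕ) : ℝ) ^ (-(δ / r)) := by
        apply mul_le_mul_of_nonneg_left step2 (Finset.prod_nonneg (fun i _ => by positivity))
    _ = ∏ i, ((m i : ℕ) : ℝ) ^ (-(1 + δ / r)) := by
        rw [← Finset.prod_mul_distrib]
        apply Finset.prod_congr rfl
        intro i _
        rw [← Real.rpow_add (h0m i)]
        ring_nf

lemma summable_norm_chain {r : ℕ} (P : (Fin r → ℕ+) → Prop) (s : Fin r → ℂ)
    (h1 : ∀ i, 1 ≤ (s i).re) (i₀ : Fin r) (h2 : 1 < (s i₀).re)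
    (hmax : ∀ m : Fin r → ℕ+, P m → ∀ i, m i ≤ m i₀) :
    Summable (fun m : {m : Fin r → ℕ+ // P m} => ‖∏ i, ((m.1 i : ℕ) : ℂ) ^ (-(s i))‖) := by
  have hr : 0 < r := i₀.pos
  set δ : ℝ := (s i₀).re - 1 with hδdef
  have hδ : 0 < δ := by simp only [hδdef]; linarith
  have he : -(1 + δ / r) < -1 := by
    have : 0 < δ / r := div_pos hδ (by exact_mod_cast hr)
    linarith
  have hsum := (summable_pi_rpow (r := r) he).comp_injective
    (Subtype.val_injective : Function.Injective (Subtype.val : {m : Fin r → ℕ+ // P m} → _))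
  apply Summable.of_nonneg_of_le (fun b => norm_nonneg _) _ hsum
  intro b
  have : ‖∏ i, ((b.1 i : ℕ) : ℂ) ^ (-(s i))‖ = ∏ i, ((b.1 i : ℕ) : ℝ) ^ (-(s i).re) := by
    rw [norm_prod]
    exact Finset.prod_congr rfl (fun i _ => norm_pnat_cpow _ _)
  rw [this]
  exact chain_bound b.1 (fun i => (s i).re) h1 i₀ (hmax b.1 b.2) δ hδ (by simp [hδdef])

lemma summable_norm_star {r : ℕ} (s : Fin (r+1) → ℂ) (h1 : ∀ i, 1 ≤ (s i).re)
    (h2 : 1 < (s (Fin.last r)).re) :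
    Summable (fun m : {m : Fin (r+1) → ℕ+ // Monotone m} => ‖∏ i, ((m.1 i : ℕ) : ℂ) ^ (-(s i))‖) :=
  summable_norm_chain _ s h1 (Fin.last r) h2 (fun m hm i => hm (Fin.le_last i))

lemma summable_norm_mz {r : ℕ} (s : Fin (r+1) → ℂ) (h1 : ∀ i, 1 ≤ (s i).re)
    (h2 : 1 < (s (Fin.last r)).re) :
    Summable (fun m : {m : Fin (r+1) → ℕ+ // StrictMono m} => ‖∏ i, ((m.1 i : ℕ) : ℂ) ^ (-(s i))‖) :=
  summable_norm_chain _ s h1 (Fin.last r) h2 (fun m hm i => hm.monotone (Fin.le_last i))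


/-- The Euler–Zagier multiple zeta-function
`ζ(s₁,…,s_r) = Σ_{0<m₁<⋯<m_r} m₁^{-s₁}⋯m_r^{-s_r}` (equal to `1` when `r = 0`). -/
noncomputable def mzeta {r : ℕ} (s : Fin r → ℂ) : ℂ :=
  ∑' m : {m : Fin r → ℕ+ // StrictMono m}, ∏ i, ((m.1 i : ℕ) : ℂ) ^ (-(s i))

/-- The star-variant
`ζ*(s₁,…,s_r) = Σ_{0<m₁≤⋯≤m_r} m₁^{-s₁}⋯m_r^{-s_r}` (equal to `1` when `r = 0`). -/
noncomputable def mzetaStar {r : ℕ} (s : Fin r → ℂ) : ℂ :=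
  ∑' m : {m : Fin r → ℕ+ // Monotone m}, ∏ i, ((m.1 i : ℕ) : ℂ) ^ (-(s i))

/-- The Schur multiple zeta-function of hook shape `(p+1, 1^q)` with
content-parametrized variables `z` : the row carries entries
`m₀ ≤ m₁ ≤ ⋯ ≤ m_p` with variables `z_0, z_1, …, z_p`, and the column carries
entries `m₀ < n₁ < ⋯ < n_q` with variables `z_{-1}, …, z_{-q}`.
The column chain (including the corner `m₀`) is encoded as a strictly monotone
tuple `mc.2 : Fin (q+1) → ℕ+` with `mc.2 0 = mc.1 0 = m₀`. -/
noncomputable def hookZeta (p q : ℕ) (z : ℤ → ℂ) : ℂ :=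
  ∑' x : {mc : (Fin (p + 1) → ℕ+) × (Fin (q + 1) → ℕ+) //
      Monotone mc.1 ∧ StrictMono mc.2 ∧ mc.1 0 = mc.2 0},
    (∏ i : Fin (p + 1), ((x.1.1 i : ℕ) : ℂ) ^ (-(z ((i : ℕ) : ℤ)))) *
    (∏ j : Fin q, ((x.1.2 j.succ : ℕ) : ℂ) ^ (-(z (-((j : ℕ) + 1 : ℤ)))))

def HIdx (u v : ℕ) : Type :=
  {mc : (Fin (u + 1) → ℕ+) × (Fin (v + 1) → ℕ+) //
    Monotone mc.1 ∧ StrictMono mc.2 ∧ mc.1 0 = mc.2 0}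

noncomputable def hookSum (u v : ℕ) (f : Fin (u + 1) → ℂ) (g : Fin v → ℂ) : ℂ :=
  ∑' x : HIdx u v,
    (∏ i, ((x.1.1 i : ℕ) : ℂ) ^ (-(f i))) * (∏ t : Fin v, ((x.1.2 t.succ : ℕ) : ℂ) ^ (-(g t)))

example (p q : ℕ) (z : ℤ → ℂ) :
    hookZeta p q z = hookSum p q (fun i => z ((i : ℕ) : ℤ)) (fun t => z (-((t : ℕ) + 1 : ℤ))) := rfl

lemma hookSum_cast {u u' v v' : ℕ} (hu : u = u') (hv : v = v')
    (f : Fin (u' + 1) → ℂ) (g : Fin v' → ℂ) :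
    hookSum u v (fun i => f (Fin.cast (by omega) i)) (fun t => g (Fin.cast hv t))
      = hookSum u' v' f g := by
  subst hu; subst hv; rfl

lemma hookSum_congr {u u' v v' : ℕ} (hu : u = u') (hv : v = v')
    {f : Fin (u + 1) → ℂ} {f' : Fin (u' + 1) → ℂ} {g : Fin v → ℂ} {g' : Fin v' → ℂ}
    (hf : ∀ i : Fin (u + 1), f i = f' (Fin.cast (by omega) i))
    (hg : ∀ t : Fin v, g t = g' (Fin.cast hv t)) :
    hookSum u v f g = hookSum u' v' f' g' := by
  rw [show f = (fun i => f' (Fin.cast (by omega) i)) from funext hf,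
    show g = (fun t => g' (Fin.cast hv t)) from funext hg]
  exact hookSum_cast hu hv f' g'

lemma mzeta_congr {r r' : ℕ} (h : r = r') {s : Fin r → ℂ} {s' : Fin r' → ℂ}
    (hs : ∀ i : Fin r, s i = s' (Fin.cast h i)) : mzeta s = mzeta s' := by
  subst h
  exact congrArg mzeta (funext hs)

lemma mzeta_of_eq_zero {r : ℕ} (h : r = 0) (s : Fin r → ℂ) : mzeta s = 1 := by
  subst h
  unfold mzeta
  have x₀ : {m : Fin 0 → ℕ+ // StrictMono m} :=
    ⟨fun i => i.elim0, fun i _ _ => i.elim0⟩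
  rw [tsum_eq_single x₀ (fun b hb => absurd (Subsingleton.elim b x₀) hb)]
  simp

lemma monotone_cons {n : ℕ} {a : ℕ+} {f : Fin (n + 1) → ℕ+} (hf : Monotone f)
    (ha : a ≤ f 0) : Monotone (Fin.cons a f : Fin (n + 2) → ℕ+) := by
  rw [Fin.monotone_iff_le_succ]
  intro i
  induction i using Fin.cases with
  | zero => simpa using ha
  | succ j =>
      have h1 : (Fin.cons a f : Fin (n + 2) → ℕ+) (Fin.castSucc j.succ) = f (Fin.castSucc j) := by
        rw [← Fin.succ_castSucc, Fin.cons_succ]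
      have h2 : (Fin.cons a f : Fin (n + 2) → ℕ+) j.succ.succ = f j.succ := Fin.cons_succ _ _ _
      rw [h1, h2]
      exact hf (Fin.castSucc_le_succ j)

lemma strictMono_cons {n : ℕ} {a : ℕ+} {f : Fin (n + 1) → ℕ+} (hf : StrictMono f)
    (ha : a < f 0) : StrictMono (Fin.cons a f : Fin (n + 2) → ℕ+) := by
  rw [Fin.strictMono_iff_lt_succ]
  intro i
  induction i using Fin.cases with
  | zero => simpa using ha
  | succ j =>
      have h1 : (Fin.cons a f : Fin (n + 2) → ℕ+) (Fin.castSucc j.succ) = f (Fin.castSucc j) := by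
        rw [← Fin.succ_castSucc, Fin.cons_succ]
      have h2 : (Fin.cons a f : Fin (n + 2) → ℕ+) j.succ.succ = f j.succ := Fin.cons_succ _ _ _
      rw [h1, h2]
      exact hf Fin.castSucc_lt_succ

lemma mzetaStar_eq_hookSum (u : ℕ) (f : Fin (u + 1) → ℂ) (g : Fin 0 → ℂ) :
    mzetaStar f = hookSum u 0 f g := by
  let e : {m : Fin (u + 1) → ℕ+ // Monotone m} ≃ HIdx u 0 :=
  { toFun := fun m => ⟨(m.1, fun _ => m.1 0), m.2,
      fun i j h => absurd (show i.1 < j.1 from h) (by have := i.2; have := j.2; omega), rfl⟩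
    invFun := fun x => ⟨x.1.1, x.2.1⟩
    left_inv := fun m => rfl
    right_inv := fun x => by
      obtain ⟨⟨a, b⟩, hm, hs, hl⟩ := x
      apply Subtype.ext
      refine Prod.ext rfl ?_
      funext t
      have ht : t = 0 := Fin.ext (by have := t.2; omega)
      rw [ht]
      exact hl }
  rw [mzetaStar, hookSum, ← Equiv.tsum_eq e]
  exact tsum_congr fun m => by simp [e]; rfl

lemma star_mul_mzeta (u c : ℕ) (f : Fin (u + 1) → ℂ) (g : Fin (c + 1) → ℂ)
    (hf1 : ∀ i, 1 ≤ (f i).re) (hf2 : 1 < (f (Fin.last u)).re)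
    (hg1 : ∀ i, 1 ≤ (g i).re) (hg2 : 1 < (g (Fin.last c)).re) :
    mzetaStar f * mzeta g =
      hookSum u (c + 1) f g +
      hookSum (u + 1) c (Fin.cons (g 0) f) (fun t => g t.succ) := by
  classical
  set F : {m : Fin (u + 1) → ℕ+ // Monotone m} → ℂ :=
    fun m => ∏ i, ((m.1 i : ℕ) : ℂ) ^ (-(f i)) with hF
  set G : {m : Fin (c + 1) → ℕ+ // StrictMono m} → ℂ :=
    fun m => ∏ i, ((m.1 i : ℕ) : ℂ) ^ (-(g i)) with hG
  have hFs : Summable fun x => ‖F x‖ := summable_norm_star f hf1 hf2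
  have hGs : Summable fun x => ‖G x‖ := summable_norm_mz g hg1 hg2
  have step1 : mzetaStar f * mzeta g = ∑' x : _ × _, F x.1 * G x.2 :=
    tsum_mul_tsum_of_summable_norm hFs hGs
  have hsum : Summable (fun x : {m : Fin (u + 1) → ℕ+ // Monotone m} ×
      {m : Fin (c + 1) → ℕ+ // StrictMono m} => F x.1 * G x.2) := (hFs.mul_norm hGs).of_norm
  set S : Set ({m : Fin (u + 1) → ℕ+ // Monotone m} × {m : Fin (c + 1) → ℕ+ // StrictMono m}) :=
    {x | x.1.1 0 < x.2.1 0} with hS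
  have split := (((hsum.subtype S).hasSum.add_compl (hsum.subtype Sᶜ).hasSum)).tsum_eq
  -- equivalence for the part S : link the two chains at the bottom
  let e₁ : ↥S ≃ HIdx u (c + 1) :=
  { toFun := fun x => ⟨(x.1.1.1, Fin.cons (x.1.1.1 0) x.1.2.1), x.1.1.2,
      strictMono_cons x.1.2.2 x.2, (Fin.cons_zero (α := fun _ : Fin (c+2) => ℕ+) (x.1.1.1 0) x.1.2.1).symm⟩
    invFun := fun y => ⟨(⟨y.1.1, y.2.1⟩, ⟨fun t => y.1.2 t.succ,
        y.2.2.1.comp Fin.strictMono_succ⟩),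
      by
        have h0 : y.1.1 0 = y.1.2 0 := y.2.2.2
        show y.1.1 0 < y.1.2 (Fin.succ 0)
        rw [h0]
        exact y.2.2.1 (Fin.succ_pos 0)⟩
    left_inv := fun x => by
      apply Subtype.ext
      refine Prod.ext rfl ?_
      apply Subtype.ext
      funext t
      exact Fin.cons_succ (α := fun _ : Fin (c+2) => ℕ+) (x.1.1.1 0) x.1.2.1 t
    right_inv := fun y => by
      obtain ⟨⟨a, b⟩, hm, hs, hl⟩ := y
      apply Subtype.ext
      refine Prod.ext rfl ?_
      show Fin.cons (a 0) (fun t => b t.succ) = b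
      rw [show a 0 = b 0 from hl]
      exact Fin.cons_self_tail b }
  have eqS : ∑' x : ↥S, F x.1.1 * G x.1.2 = hookSum u (c + 1) f g := by
    rw [hookSum, ← Equiv.tsum_eq e₁]
    apply tsum_congr
    intro x
    show (∏ i, ((x.1.1.1 i : ℕ) : ℂ) ^ (-(f i))) *
        (∏ t : Fin (c + 1), (((Fin.cons (x.1.1.1 0) x.1.2.1 : Fin (c+2) → ℕ+) t.succ : ℕ) : ℂ) ^ (-(g t)))
      = F x.1.1 * G x.1.2
    simp [hF, hG, Fin.cons_succ]
  -- equivalence for the part Sᶜ : move the bottom of the strict chain into the weak chain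
  let e₂ : ↥Sᶜ ≃ HIdx (u + 1) c :=
  { toFun := fun x => ⟨(Fin.cons (x.1.2.1 0) x.1.1.1, x.1.2.1),
      monotone_cons x.1.1.2 (not_lt.mp x.2), x.1.2.2, Fin.cons_zero (α := fun _ : Fin (u+2) => ℕ+) (x.1.2.1 0) x.1.1.1⟩
    invFun := fun y => ⟨(⟨fun i => y.1.1 i.succ, y.2.1.comp Fin.strictMono_succ.monotone⟩,
        ⟨y.1.2, y.2.2.1⟩),
      by
        show ¬ (y.1.1 (Fin.succ 0) < y.1.2 0)
        apply not_lt.mpr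
        calc y.1.2 0 = y.1.1 0 := y.2.2.2.symm
          _ ≤ y.1.1 (Fin.succ 0) := y.2.1 (Fin.zero_le _)⟩
    left_inv := fun x => by
      apply Subtype.ext
      refine Prod.ext ?_ rfl
      apply Subtype.ext
      funext t
      exact Fin.cons_succ (α := fun _ : Fin (u+2) => ℕ+) (x.1.2.1 0) x.1.1.1 t
    right_inv := fun y => by
      obtain ⟨⟨a, b⟩, hm, hs, hl⟩ := y
      apply Subtype.ext
      refine Prod.ext ?_ rfl
      show Fin.cons (b 0) (fun i => a i.succ) = a
      rw [show b 0 = a 0 from hl.symm]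
      exact Fin.cons_self_tail a }
  have eqSc : ∑' x : ↥Sᶜ, F x.1.1 * G x.1.2
      = hookSum (u + 1) c (Fin.cons (g 0) f) (fun t => g t.succ) := by
    rw [hookSum, ← Equiv.tsum_eq e₂]
    apply tsum_congr
    intro x
    refine Eq.symm ?_
    show (∏ i : Fin (u + 2),
          (((Fin.cons (x.1.2.1 0) x.1.1.1 : Fin (u+2) → ℕ+) i : ℕ) : ℂ) ^
            (-((Fin.cons (g 0) f : Fin (u+2) → ℂ) i))) *
        (∏ t : Fin c, ((x.1.2.1 t.succ : ℕ) : ℂ) ^ (-(g t.succ)))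
      = F x.1.1 * G x.1.2
    rw [Fin.prod_univ_succ]
    simp only [Fin.cons_zero, Fin.cons_succ, hF, hG]
    rw [Fin.prod_univ_succ (f := fun i : Fin (c+1) => ((x.1.2.1 i : ℕ) : ℂ) ^ (-(g i)))]
    ring
  rw [step1, split, ← eqS, ← eqSc]
  rfl

/-- Theorem 3.3 (3.1) of Matsumoto–Nakasuji:
`ζ_{(p+1,1^q)}(z) = Σ_{j=0}^{q} (−1)^j ζ*(z_{−j},…,z_0,…,z_p) ζ(z_{−j−1},…,z_{−q})`. -/
theorem hook_zeta_eq_sum_star_mzeta (p q : ℕ) (z : ℤ → ℂ)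
    (h1 : ∀ k : ℤ, -(q : ℤ) ≤ k → k ≤ (p : ℤ) → 1 ≤ (z k).re)
    (h2 : 1 < (z ((p : ℕ) : ℤ)).re) (h3 : 1 < (z (-(q : ℤ))).re) :
    hookZeta p q z =
      ∑ j ∈ Finset.range (q + 1),
        (-1 : ℂ) ^ j *
          mzetaStar (fun a : Fin (j + (p + 1)) => z (((a : ℕ) : ℤ) - (j : ℤ))) *
          mzeta (fun a : Fin (q - j) => z (-(j : ℤ) - 1 - ((a : ℕ) : ℤ))) := by
  have zcongr : ∀ a b : ℤ, a = b → z a = z b := fun a b h => by rw [h]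
  let v : ℕ → ℂ := fun j => (-1 : ℂ) ^ j *
    hookSum (j + p) (q - j) (fun i : Fin (j + p + 1) => z (((i : ℕ) : ℤ) - (j : ℤ)))
      (fun t : Fin (q - j) => z (-(j : ℤ) - 1 - ((t : ℕ) : ℤ)))
  -- the j = 0 term is the hook zeta itself
  have hzero : hookZeta p q z = v 0 := by
    have e : hookSum p q (fun i : Fin (p + 1) => z ((i : ℕ) : ℤ))
          (fun t : Fin q => z (-((t : ℕ) + 1 : ℤ)))
        = hookSum (0 + p) (q - 0) (fun i : Fin (0 + p + 1) => z (((i : ℕ) : ℤ) - ((0 : ℕ) : ℤ)))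
          (fun t : Fin (q - 0) => z (-((0 : ℕ) : ℤ) - 1 - ((t : ℕ) : ℤ))) := by
      refine hookSum_congr (by omega) (by omega) (fun i => ?_) (fun t => ?_)
      · refine zcongr _ _ ?_
        simp only [Fin.coe_cast]
        omega
      · refine zcongr _ _ ?_
        simp only [Fin.coe_cast]
        omega
    show hookSum p q (fun i : Fin (p + 1) => z ((i : ℕ) : ℤ))
        (fun t : Fin q => z (-((t : ℕ) + 1 : ℤ))) = v 0
    rw [e]
    show _ = (-1 : ℂ) ^ 0 * _
    rw [pow_zero, one_mul]
  -- the last term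
  have last : (-1 : ℂ) ^ q *
        mzetaStar (fun i : Fin (q + p + 1) => z (((i : ℕ) : ℤ) - (q : ℤ))) *
        mzeta (fun a : Fin (q - q) => z (-(q : ℤ) - 1 - ((a : ℕ) : ℤ))) = v q := by
    rw [mzeta_of_eq_zero (by omega : q - q = 0), mul_one]
    rw [mzetaStar_eq_hookSum (q + p) _ (fun t : Fin 0 => (0 : ℂ))]
    show _ = (-1 : ℂ) ^ q * hookSum (q + p) (q - q) _ _
    congr 1
    refine hookSum_congr rfl (by omega) (fun i => ?_) (fun t => t.elim0)
    refine zcongr _ _ ?_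
    simp only [Fin.coe_cast]
  -- the telescoping step
  have key : ∀ j, j < q →
      (-1 : ℂ) ^ j *
        mzetaStar (fun i : Fin (j + p + 1) => z (((i : ℕ) : ℤ) - (j : ℤ))) *
        mzeta (fun a : Fin (q - j) => z (-(j : ℤ) - 1 - ((a : ℕ) : ℤ)))
      = v j - v (j + 1) := by
    intro j hj
    set cc := q - j - 1 with hcc
    have hG : mzeta (fun a : Fin (q - j) => z (-(j : ℤ) - 1 - ((a : ℕ) : ℤ)))
        = mzeta (fun t : Fin (cc + 1) => z (-(j : ℤ) - 1 - ((t : ℕ) : ℤ))) := by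
      refine mzeta_congr (by omega) (fun a => ?_)
      refine zcongr _ _ ?_
      simp only [Fin.coe_cast]
    have hf1 : ∀ i : Fin (j + p + 1),
        1 ≤ ((fun i : Fin (j + p + 1) => z (((i : ℕ) : ℤ) - (j : ℤ))) i).re :=
      fun i => h1 _ (by have := i.isLt; omega) (by have := i.isLt; omega)
    have hf2 : 1 < ((fun i : Fin (j + p + 1) => z (((i : ℕ) : ℤ) - (j : ℤ)))
        (Fin.last (j + p))).re := by
      show 1 < (z ((((Fin.last (j + p) : Fin (j + p + 1)) : ℕ) : ℤ) - (j : ℤ))).re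
      rw [show (((Fin.last (j + p) : Fin (j + p + 1)) : ℕ) : ℤ) - (j : ℤ) = ((p : ℕ) : ℤ) by
        rw [Fin.val_last]; push_cast; ring]
      exact h2
    have hg1 : ∀ t : Fin (cc + 1),
        1 ≤ ((fun t : Fin (cc + 1) => z (-(j : ℤ) - 1 - ((t : ℕ) : ℤ))) t).re :=
      fun t => h1 _ (by have := t.isLt; omega) (by have := t.isLt; omega)
    have hg2 : 1 < ((fun t : Fin (cc + 1) => z (-(j : ℤ) - 1 - ((t : ℕ) : ℤ)))
        (Fin.last cc)).re := by
      show 1 < (z (-(j : ℤ) - 1 - (((Fin.last cc : Fin (cc + 1)) : ℕ) : ℤ))).re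
      rw [show -(j : ℤ) - 1 - (((Fin.last cc : Fin (cc + 1)) : ℕ) : ℤ) = -(q : ℤ) by
        rw [Fin.val_last]; omega]
      exact h3
    have main := star_mul_mzeta (j + p) cc
      (fun i : Fin (j + p + 1) => z (((i : ℕ) : ℤ) - (j : ℤ)))
      (fun t : Fin (cc + 1) => z (-(j : ℤ) - 1 - ((t : ℕ) : ℤ))) hf1 hf2 hg1 hg2
    have hA : hookSum (j + p) (cc + 1)
          (fun i : Fin (j + p + 1) => z (((i : ℕ) : ℤ) - (j : ℤ)))
          (fun t : Fin (cc + 1) => z (-(j : ℤ) - 1 - ((t : ℕ) : ℤ)))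
        = hookSum (j + p) (q - j)
          (fun i : Fin (j + p + 1) => z (((i : ℕ) : ℤ) - (j : ℤ)))
          (fun t : Fin (q - j) => z (-(j : ℤ) - 1 - ((t : ℕ) : ℤ))) := by
      refine hookSum_congr rfl (by omega) (fun i => ?_) (fun t => ?_)
      · refine zcongr _ _ ?_
        simp only [Fin.coe_cast]
      · refine zcongr _ _ ?_
        simp only [Fin.coe_cast]
    have hB : hookSum (j + p + 1) cc
          (Fin.cons ((fun t : Fin (cc + 1) => z (-(j : ℤ) - 1 - ((t : ℕ) : ℤ))) 0)
            (fun i : Fin (j + p + 1) => z (((i : ℕ) : ℤ) - (j : ℤ))))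
          (fun t : Fin cc => z (-(j : ℤ) - 1 - (((t.succ : Fin (cc + 1)) : ℕ) : ℤ)))
        = hookSum ((j + 1) + p) (q - (j + 1))
          (fun i : Fin ((j + 1) + p + 1) => z (((i : ℕ) : ℤ) - ((j + 1 : ℕ) : ℤ)))
          (fun t : Fin (q - (j + 1)) => z (-((j + 1 : ℕ) : ℤ) - 1 - ((t : ℕ) : ℤ))) := by
      refine hookSum_congr (by omega) (by omega) (fun i => ?_) (fun t => ?_)
      · induction i using Fin.cases with
        | zero =>
            rw [Fin.cons_zero]
            refine zcongr _ _ ?_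
            simp only [Fin.coe_cast, Fin.val_zero]
            omega
        | succ a =>
            rw [Fin.cons_succ]
            refine zcongr _ _ ?_
            simp only [Fin.coe_cast, Fin.val_succ]
            omega
      · refine zcongr _ _ ?_
        simp only [Fin.coe_cast, Fin.val_succ]
        omega
    have expand : v j - v (j + 1) = (-1 : ℂ) ^ j *
        (hookSum (j + p) (q - j)
          (fun i : Fin (j + p + 1) => z (((i : ℕ) : ℤ) - (j : ℤ)))
          (fun t : Fin (q - j) => z (-(j : ℤ) - 1 - ((t : ℕ) : ℤ))) +
        hookSum ((j + 1) + p) (q - (j + 1))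
          (fun i : Fin ((j + 1) + p + 1) => z (((i : ℕ) : ℤ) - ((j + 1 : ℕ) : ℤ)))
          (fun t : Fin (q - (j + 1)) => z (-((j + 1 : ℕ) : ℤ) - 1 - ((t : ℕ) : ℤ)))) := by
      show (-1 : ℂ) ^ j *
          hookSum (j + p) (q - j)
            (fun i : Fin (j + p + 1) => z (((i : ℕ) : ℤ) - (j : ℤ)))
            (fun t : Fin (q - j) => z (-(j : ℤ) - 1 - ((t : ℕ) : ℤ))) -
        (-1 : ℂ) ^ (j + 1) *
          hookSum ((j + 1) + p) (q - (j + 1))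
            (fun i : Fin ((j + 1) + p + 1) => z (((i : ℕ) : ℤ) - ((j + 1 : ℕ) : ℤ)))
            (fun t : Fin (q - (j + 1)) => z (-((j + 1 : ℕ) : ℤ) - 1 - ((t : ℕ) : ℤ))) = _
      ring
    rw [mul_assoc, hG, main, hA, hB, expand]
  -- assemble
  calc hookZeta p q z = v 0 := hzero
    _ = (v 0 - v q) + v q := by ring
    _ = (∑ j ∈ Finset.range q, (v j - v (j + 1))) + v q := by
        rw [Finset.sum_range_sub' v q]
    _ = (∑ j ∈ Finset.range q,
          (-1 : ℂ) ^ j *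
            mzetaStar (fun a : Fin (j + (p + 1)) => z (((a : ℕ) : ℤ) - (j : ℤ))) *
            mzeta (fun a : Fin (q - j) => z (-(j : ℤ) - 1 - ((a : ℕ) : ℤ)))) + v q := by
        refine congrArg (· + v q) (Finset.sum_congr rfl (fun j hj => ?_))
        exact (key j (Finset.mem_range.mp hj)).symm
    _ = ∑ j ∈ Finset.range (q + 1),
          (-1 : ℂ) ^ j *
            mzetaStar (fun a : Fin (j + (p + 1)) => z (((a : ℕ) : ℤ) - (j : ℤ))) *
            mzeta (fun a : Fin (q - j) => z (-(j : ℤ) - 1 - ((a : ℕ) : ℤ))) := by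
        rw [Finset.sum_range_succ]
        exact congrArg (_ + ·) last.symm
end

section
/- Let λ be a partition and let s = (s_{ij}) be an assignment of a complex number to each cell (i,j) of the Young diagram of λ such that Re(s_{ij}) ≥ 1 for every cell and Re(s_{ij}) > 1 for every corner cell of λ (a cell (i,j) ∈ λ with (i+1,j) ∉ λ and (i,j+1) ∉ λ). Then the Schur multiple zeta series Σ_{M ∈ SSYT(λ)} ∏_{(i,j)∈λ} m_{ij}^{−s_{ij}} converges absolutely. -/
/-- `T : ℕ × ℕ → ℕ` is a semi-standard Young tableau of shape `lam`
(a partition given by its row lengths; rows `i` and columns `j` are indexed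
from `0`, the cells being the pairs `(i,j)` with `j < lam i`): positive
entries on the cells, weakly increasing rows, strictly increasing columns,
and value `0` outside the diagram. -/
def IsSSYT (lam : ℕ → ℕ) (T : ℕ × ℕ → ℕ) : Prop :=
  (∀ i j, j < lam i → 0 < T (i, j)) ∧
  (∀ i j, j + 1 < lam i → T (i, j) ≤ T (i, j + 1)) ∧
  (∀ i j, j < lam (i + 1) → T (i, j) < T (i + 1, j)) ∧
  (∀ i j, ¬ j < lam i → T (i, j) = 0)

/-- The cells of the Young diagram of `lam`, given a bound `L` on the number
of (nonempty) rows. -/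
def cellFinset (lam : ℕ → ℕ) (L : ℕ) : Finset (ℕ × ℕ) :=
  (Finset.range L ×ˢ Finset.range (lam 0)).filter fun c => c.2 < lam c.1

/-- The Schur multiple zeta-function
`ζ_λ(s) = Σ_{M ∈ SSYT(λ)} ∏_{(i,j) ∈ λ} m_{ij}^{-s_{ij}}`. -/
noncomputable def schurZeta (lam : ℕ → ℕ) (L : ℕ) (s : ℕ × ℕ → ℂ) : ℂ :=
  ∑' T : {T : ℕ × ℕ → ℕ // IsSSYT lam T},
    ∏ c ∈ cellFinset lam L, ((T.1 c : ℕ) : ℂ) ^ (-(s c))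

/-- The conjugate partition: `conjP lam L j = #{i : lam i > j}`. -/
def conjP (lam : ℕ → ℕ) (L : ℕ) (j : ℕ) : ℕ :=
  ((Finset.range L).filter fun i => j < lam i).card


lemma mem_cellFinset {lam : ℕ → ℕ} (hanti : Antitone lam) {L : ℕ} {c : ℕ × ℕ} :
    c ∈ cellFinset lam L ↔ c.1 < L ∧ c.2 < lam c.1 := by
  simp only [cellFinset, Finset.mem_filter, Finset.mem_product, Finset.mem_range]
  exact ⟨fun h => ⟨h.1.1, h.2⟩, fun h => ⟨⟨h.1, lt_of_lt_of_le h.2 (hanti (Nat.zero_le _))⟩, h.2⟩⟩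

lemma key (L : ℕ) : ∀ (N : ℕ) (lam : ℕ → ℕ), Antitone lam → (∀ i, L ≤ i → lam i = 0) →
    (∑ i ∈ Finset.range L, lam i = N) → ∀ r : ℕ × ℕ → ℝ,
    (∀ i j, j < lam i → 1 ≤ r (i, j)) →
    (∀ i j, j < lam i → lam (i + 1) ≤ j → lam i ≤ j + 1 → 1 < r (i, j)) →
    Summable (fun T : {T : ℕ × ℕ → ℕ // IsSSYT lam T} =>
      ∏ c ∈ cellFinset lam L, (T.1 c : ℝ) ^ (-(r c))) := by
  intro N
  induction N with
  | zero =>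
    intro lam hanti hL hsum r h1 h2
    have hlam : ∀ i, lam i = 0 := by
      intro i
      rcases lt_or_ge i L with h | h
      · exact (Finset.sum_eq_zero_iff.1 hsum) i (Finset.mem_range.2 h)
      · exact hL i h
    haveI : Subsingleton {T : ℕ × ℕ → ℕ // IsSSYT lam T} := by
      constructor
      rintro ⟨T, hT⟩ ⟨S, hS⟩
      apply Subtype.ext
      funext x
      rcases x with ⟨i, j⟩
      show T (i, j) = S (i, j)
      rw [hT.2.2.2 i j (by simp [hlam i]), hS.2.2.2 i j (by simp [hlam i])]
    haveI : Finite {T : ℕ × ℕ → ℕ // IsSSYT lam T} := Finite.of_subsingleton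
    exact Summable.of_finite
  | succ N ih =>
    intro lam hanti hL hsum r h1 h2
    -- choose the bottom row i0 and its last cell (i0, j0)
    have hex : ∃ i, i ≤ L ∧ 0 < lam i := by
      by_contra h
      push_neg at h
      have : ∑ i ∈ Finset.range L, lam i = 0 :=
        Finset.sum_eq_zero fun i hi => by
          have := h i (le_of_lt (Finset.mem_range.1 hi)); omega
      omega
    obtain ⟨iw, hiwL, hiw⟩ := hex
    set i0 := Nat.findGreatest (fun i => 0 < lam i) L with hi0def
    have hi0pos : 0 < lam i0 := Nat.findGreatest_spec (P := fun i => 0 < lam i) hiwL hiw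
    have hi0L : i0 < L := by
      by_contra h
      have := hL i0 (le_of_not_gt h)
      omega
    have hnext : lam (i0 + 1) = 0 := by
      rcases le_or_gt (i0 + 1) L with h | h
      · have := Nat.findGreatest_is_greatest (P := fun i => 0 < lam i) (Nat.lt_succ_self i0) h
        simpa using this
      · exact hL _ (by omega)
    set j0 := lam i0 - 1 with hj0def
    have hrow : lam i0 = j0 + 1 := by omega
    set c : ℕ × ℕ := (i0, j0) with hcdef
    -- the reduced shape μ
    set μ : ℕ → ℕ := Function.update lam i0 j0 with hμdef
    have hμi0 : μ i0 = j0 := Function.update_self _ _ _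
    have hμne : ∀ i, i ≠ i0 → μ i = lam i := fun i hi => Function.update_of_ne hi _ _
    have hμle : ∀ i, μ i ≤ lam i := by
      intro i
      rcases eq_or_ne i i0 with rfl | h
      · rw [hμi0]; omega
      · rw [hμne i h]
    have hμanti : Antitone μ := by
      apply antitone_nat_of_succ_le
      intro i
      rcases eq_or_ne i i0 with rfl | h
      · rw [hμi0]
        exact le_trans (hμle _) (by omega)
      · rw [hμne i h]
        exact le_trans (hμle _) (hanti (Nat.le_succ i))
    have hμL : ∀ i, L ≤ i → μ i = 0 := by
      intro i hi
      rw [hμne i (by omega), hL i hi]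
    have hμsum : ∑ i ∈ Finset.range L, μ i = N := by
      have h1' : ∑ i ∈ Finset.range L, μ i
          = j0 + ∑ i ∈ (Finset.range L).erase i0, lam i := by
        rw [hμdef, Finset.sum_update_of_mem (Finset.mem_range.2 hi0L), ← Finset.erase_eq]
      have h2' : lam i0 + ∑ i ∈ (Finset.range L).erase i0, lam i
          = ∑ i ∈ Finset.range L, lam i := Finset.add_sum_erase _ _ (Finset.mem_range.2 hi0L)
      omega
    -- exponent bookkeeping
    have hrc : 1 < r c := h2 i0 j0 (by omega) (by omega) (by omega)
    set δ : ℝ := (r c - 1) / 4 with hδdef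
    have hδpos : 0 < δ := by rw [hδdef]; linarith
    set r' : ℕ × ℕ → ℝ := fun x => r x +
        ((if 0 < j0 ∧ x = (i0, j0 - 1) then δ else 0) +
         (if 0 < i0 ∧ x = (i0 - 1, j0) then δ else 0)) with hr'def
    have hite : ∀ (p : Prop) [Decidable p], (0:ℝ) ≤ if p then δ else 0 := by
      intro p _; split_ifs <;> linarith
    have hr'ge : ∀ x, r x ≤ r' x := by
      intro x
      have := hite (0 < j0 ∧ x = (i0, j0 - 1))
      have := hite (0 < i0 ∧ x = (i0 - 1, j0))
      rw [hr'def]; dsimp only; linarith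
    have h1' : ∀ i j, j < μ i → 1 ≤ r' (i, j) := fun i j hj =>
      le_trans (h1 i j (lt_of_lt_of_le hj (hμle i))) (hr'ge _)
    have h2' : ∀ i j, j < μ i → μ (i + 1) ≤ j → μ i ≤ j + 1 → 1 < r' (i, j) := by
      intro i j hj hbelow hright
      rcases eq_or_ne i i0 with rfl | hii
      · rw [hμi0] at hj hright
        have hj0pos : 0 < j0 := by omega
        have hjeq : j = j0 - 1 := by omega
        have e1 : (if 0 < j0 ∧ ((i0, j) : ℕ × ℕ) = (i0, j0 - 1) then δ else 0) = δ :=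
          if_pos ⟨hj0pos, by rw [hjeq]⟩
        have hb : 1 ≤ r (i0, j) := h1 i0 j (by omega)
        have := hite (0 < i0 ∧ ((i0, j) : ℕ × ℕ) = (i0 - 1, j0))
        rw [hr'def]; dsimp only; rw [e1]; linarith
      · have hμi : μ i = lam i := hμne i hii
        rw [hμi] at hj hright
        rcases eq_or_ne (i + 1) i0 with hii1 | hii1
        · rcases le_or_gt (lam (i + 1)) j with hle | hlt
          · exact lt_of_lt_of_le (h2 i j hj hle hright) (hr'ge _)
          · -- j = j0, i = i0 - 1
            rw [hii1, hμi0] at hbelow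
            rw [hii1, hrow] at hlt
            have hjeq : j = j0 := by omega
            have hi0pos' : 0 < i0 := by omega
            have e2 : (if 0 < i0 ∧ ((i, j) : ℕ × ℕ) = (i0 - 1, j0) then δ else 0) = δ :=
              if_pos ⟨hi0pos', by rw [hjeq]; congr 1; omega⟩
            have hb : 1 ≤ r (i, j) := h1 i j hj
            have := hite (0 < j0 ∧ ((i, j) : ℕ × ℕ) = (i0, j0 - 1))
            rw [hr'def]; dsimp only; rw [e2]; linarith
        · rw [hμne (i+1) hii1] at hbelow
          exact lt_of_lt_of_le (h2 i j hj hbelow hright) (hr'ge _)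
    -- cell sets
    have hcells : cellFinset lam L = insert c (cellFinset μ L) := by
      ext x
      rw [Finset.mem_insert, mem_cellFinset hanti, mem_cellFinset hμanti]
      constructor
      · rintro ⟨hx1, hx2⟩
        rcases eq_or_ne x.1 i0 with h | h
        · rcases eq_or_ne x.2 j0 with h2 | h2
          · left
            rw [hcdef, ← h, ← h2]
          · right
            refine ⟨hx1, ?_⟩
            rw [h, hμi0]
            rw [h, hrow] at hx2
            omega
        · exact Or.inr ⟨hx1, by rw [hμne _ h]; exact hx2⟩
      · rintro (rfl | ⟨hx1, hx2⟩)
        · rw [hcdef]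
          exact ⟨hi0L, show j0 < lam i0 by omega⟩
        · exact ⟨hx1, lt_of_lt_of_le hx2 (hμle _)⟩
    have hcnotμ : c ∉ cellFinset μ L := by
      rw [mem_cellFinset hμanti]
      rw [hcdef]
      simp only [not_and]
      intro _
      rw [hμi0]
      omega
    -- restriction of an SSYT of lam to μ
    have hres : ∀ T : ℕ × ℕ → ℕ, IsSSYT lam T → IsSSYT μ (Function.update T c 0) := by
      rintro T ⟨hp, hr, hc, hz⟩
      refine ⟨?_, ?_, ?_, ?_⟩
      · intro i j hj
        have hne : ((i, j) : ℕ × ℕ) ≠ c := by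
          rcases eq_or_ne i i0 with rfl | h
          · rw [hμi0] at hj
            rw [hcdef]
            simp only [ne_eq, Prod.mk.injEq, not_and]
            omega
          · rw [hcdef]
            simp only [ne_eq, Prod.mk.injEq, not_and]
            omega
        rw [Function.update_of_ne hne]
        exact hp i j (lt_of_lt_of_le hj (hμle i))
      · intro i j hj
        have hne1 : ((i, j) : ℕ × ℕ) ≠ c := by
          rcases eq_or_ne i i0 with rfl | h
          · rw [hμi0] at hj
            rw [hcdef]; simp only [ne_eq, Prod.mk.injEq, not_and]; omega
          · rw [hcdef]; simp only [ne_eq, Prod.mk.injEq, not_and]; omega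
        have hne2 : ((i, j + 1) : ℕ × ℕ) ≠ c := by
          rcases eq_or_ne i i0 with rfl | h
          · rw [hμi0] at hj
            rw [hcdef]; simp only [ne_eq, Prod.mk.injEq, not_and]; omega
          · rw [hcdef]; simp only [ne_eq, Prod.mk.injEq, not_and]; omega
        rw [Function.update_of_ne hne1, Function.update_of_ne hne2]
        exact hr i j (lt_of_lt_of_le hj (hμle i))
      · intro i j hj
        have hne1 : ((i, j) : ℕ × ℕ) ≠ c := by
          rcases eq_or_ne i i0 with rfl | h
          · have : j < lam (i0 + 1) := lt_of_lt_of_le hj (hμle _)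
            rw [hcdef]; simp only [ne_eq, Prod.mk.injEq, not_and]; omega
          · rw [hcdef]; simp only [ne_eq, Prod.mk.injEq, not_and]; omega
        have hne2 : ((i + 1, j) : ℕ × ℕ) ≠ c := by
          rcases eq_or_ne (i + 1) i0 with h | h
          · rw [h, hμi0] at hj
            rw [hcdef]; simp only [ne_eq, Prod.mk.injEq, not_and]; omega
          · rw [hcdef]; simp only [ne_eq, Prod.mk.injEq, not_and]; omega
        rw [Function.update_of_ne hne1, Function.update_of_ne hne2]
        exact hc i j (lt_of_lt_of_le hj (hμle _))
      · intro i j hj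
        rcases eq_or_ne ((i, j) : ℕ × ℕ) c with he | he
        · rw [he, Function.update_self]
        · rw [Function.update_of_ne he]
          apply hz i j
          intro hlt
          apply hj
          rcases eq_or_ne i i0 with rfl | h
          · rw [hμi0]
            rw [hrow] at hlt
            have : j ≠ j0 := by
              intro hjj
              apply he
              rw [hcdef, hjj]
            omega
          · rw [hμne i h]; exact hlt
    -- lower bound for the removed entry
    set low : (ℕ × ℕ → ℕ) → ℕ := fun U =>
      max (if 0 < j0 then U (i0, j0 - 1) else 1)
          (if 0 < i0 then U (i0 - 1, j0) + 1 else 1) with hlowdef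
    have hlow1 : ∀ U : ℕ × ℕ → ℕ, 1 ≤ low U := by
      intro U
      refine le_trans ?_ (le_max_right _ _)
      split_ifs <;> omega
    set P : (ℕ × ℕ → ℕ) → ℝ := fun U => ∏ x ∈ cellFinset μ L, (U x : ℝ) ^ (-(r x)) with hPdef
    set Q : (ℕ × ℕ → ℕ) → ℝ := fun U => ∏ x ∈ cellFinset μ L, (U x : ℝ) ^ (-(r' x)) with hQdef
    set g : {T : ℕ × ℕ → ℕ // IsSSYT μ T} × ℕ → ℝ := fun Um =>
      (if low Um.1.1 ≤ Um.2 then (Um.2 : ℝ) ^ (-(r c)) else 0) * P Um.1.1 with hgdef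
    set φ : {T : ℕ × ℕ → ℕ // IsSSYT lam T} → {T : ℕ × ℕ → ℕ // IsSSYT μ T} × ℕ :=
      fun T => (⟨Function.update T.1 c 0, hres T.1 T.2⟩, T.1 c) with hφdef
    have hφinj : Function.Injective φ := by
      intro T S h
      rw [hφdef] at h
      simp only [Prod.mk.injEq, Subtype.mk.injEq] at h
      apply Subtype.ext
      funext x
      rcases eq_or_ne x c with rfl | hx
      · exact h.2
      · have := congrFun h.1 x
        rwa [Function.update_of_ne hx, Function.update_of_ne hx] at this
    have hPnonneg : ∀ U, 0 ≤ P U := fun U =>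
      Finset.prod_nonneg fun x _ => Real.rpow_nonneg (Nat.cast_nonneg _) _
    have hQnonneg : ∀ U, 0 ≤ Q U := fun U =>
      Finset.prod_nonneg fun x _ => Real.rpow_nonneg (Nat.cast_nonneg _) _
    have hgnonneg : ∀ Um, 0 ≤ g Um := by
      intro Um
      rw [hgdef]
      apply mul_nonneg _ (hPnonneg _)
      split_ifs
      · exact Real.rpow_nonneg (Nat.cast_nonneg _) _
      · exact le_refl 0
    -- f = g ∘ φ
    have hfg : ∀ T : {T : ℕ × ℕ → ℕ // IsSSYT lam T},
        (∏ x ∈ cellFinset lam L, (T.1 x : ℝ) ^ (-(r x))) = g (φ T) := by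
      intro T
      obtain ⟨hp, hrr, hcc, hz⟩ := T.2
      have hTc : low (Function.update T.1 c 0) ≤ T.1 c := by
        rw [hlowdef]
        dsimp only
        apply max_le
        · split_ifs with h
          · have hne : ((i0, j0 - 1) : ℕ × ℕ) ≠ c := by
              rw [hcdef]; simp only [ne_eq, Prod.mk.injEq, not_and]; omega
            rw [Function.update_of_ne hne]
            have h5 := hrr i0 (j0 - 1) (by omega)
            have heq : j0 - 1 + 1 = j0 := by omega
            rw [heq] at h5
            rw [hcdef]
            exact h5
          · rw [hcdef]; exact hp i0 j0 (by omega)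
        · split_ifs with h
          · have hne : ((i0 - 1, j0) : ℕ × ℕ) ≠ c := by
              rw [hcdef]; simp only [ne_eq, Prod.mk.injEq, not_and]; omega
            rw [Function.update_of_ne hne]
            have hlt : j0 < lam (i0 - 1 + 1) := by rw [show i0 - 1 + 1 = i0 by omega]; omega
            have h5 := hcc (i0 - 1) j0 hlt
            rw [show i0 - 1 + 1 = i0 by omega] at h5
            rw [hcdef]
            omega
          · rw [hcdef]; exact hp i0 j0 (by omega)
      rw [hgdef, hφdef]
      dsimp only
      rw [if_pos hTc]
      rw [hcells, Finset.prod_insert hcnotμ, hPdef]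
      congr 1
      apply Finset.prod_congr rfl
      intro x hx
      have hxc : x ≠ c := fun he => hcnotμ (he ▸ hx)
      rw [Function.update_of_ne hxc]
    -- splitting Q as P times boost factors
    have hQP : ∀ U : {T : ℕ × ℕ → ℕ // IsSSYT μ T}, Q U.1 = P U.1 *
        ((if 0 < j0 then (U.1 (i0, j0 - 1) : ℝ) ^ (-δ) else 1) *
         (if 0 < i0 then (U.1 (i0 - 1, j0) : ℝ) ^ (-δ) else 1)) := by
      intro U
      have hsplit : ∀ x ∈ cellFinset μ L, (U.1 x : ℝ) ^ (-(r' x)) =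
          (U.1 x : ℝ) ^ (-(r x)) *
          ((if 0 < j0 ∧ x = (i0, j0 - 1) then (U.1 x : ℝ) ^ (-δ) else 1) *
           (if 0 < i0 ∧ x = (i0 - 1, j0) then (U.1 x : ℝ) ^ (-δ) else 1)) := by
        intro x hx
        have hxpos : (0:ℝ) < (U.1 x : ℝ) := by
          rw [mem_cellFinset hμanti] at hx
          have := U.2.1 x.1 x.2 hx.2
          exact_mod_cast this
        rw [hr'def]
        dsimp only
        rw [neg_add, Real.rpow_add hxpos, neg_add, Real.rpow_add hxpos]
        congr 1
        congr 1 <;> (split_ifs <;> simp [Real.rpow_zero])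
      rw [hQdef, hPdef]
      dsimp only
      rw [Finset.prod_congr rfl hsplit, Finset.prod_mul_distrib, Finset.prod_mul_distrib]
      congr 1
      congr 1
      · by_cases h : 0 < j0
        · have hmem : ((i0, j0 - 1) : ℕ × ℕ) ∈ cellFinset μ L := by
            rw [mem_cellFinset hμanti]
            exact ⟨hi0L, by rw [hμi0]; omega⟩
          simp only [h, true_and, if_pos]
          rw [Finset.prod_ite_eq' (cellFinset μ L) ((i0, j0 - 1) : ℕ × ℕ)
            (fun x => (U.1 x : ℝ) ^ (-δ)), if_pos hmem]
        · simp [h]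
      · by_cases h : 0 < i0
        · have hmem : ((i0 - 1, j0) : ℕ × ℕ) ∈ cellFinset μ L := by
            rw [mem_cellFinset hμanti]
            refine ⟨by omega, ?_⟩
            rw [hμne (i0 - 1) (by omega)]
            have := hanti (show i0 - 1 ≤ i0 by omega)
            omega
          simp only [h, true_and, if_pos]
          rw [Finset.prod_ite_eq' (cellFinset μ L) ((i0 - 1, j0) : ℕ × ℕ)
            (fun x => (U.1 x : ℝ) ^ (-δ)), if_pos hmem]
        · simp [h]
    -- termwise domination
    have hterm : ∀ (U : {T : ℕ × ℕ → ℕ // IsSSYT μ T}) (m : ℕ),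
        g (U, m) ≤ (m : ℝ) ^ (-(1 + 2*δ)) * Q U.1 := by
      intro U m
      rw [hgdef]
      dsimp only
      split_ifs with hm
      · have hm1 : 1 ≤ m := le_trans (hlow1 _) hm
        have hmR : (1:ℝ) ≤ (m:ℝ) := by exact_mod_cast hm1
        have hmpos : (0:ℝ) < (m:ℝ) := lt_of_lt_of_le zero_lt_one hmR
        have hl : (m:ℝ) ^ (-δ) ≤ (if 0 < j0 then (U.1 (i0, j0 - 1) : ℝ) ^ (-δ) else 1) := by
          split_ifs with h
          · have hle : U.1 (i0, j0 - 1) ≤ m := by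
              have : (if 0 < j0 then U.1 (i0, j0 - 1) else 1) ≤ low U.1 := le_max_left _ _
              rw [if_pos h] at this
              omega
            have hpos : 0 < U.1 (i0, j0 - 1) := by
              apply U.2.1
              rw [hμi0]; omega
            exact Real.rpow_le_rpow_of_nonpos (by exact_mod_cast hpos) (by exact_mod_cast hle)
              (by linarith)
          · exact Real.rpow_le_one_of_one_le_of_nonpos hmR (by linarith)
        have hu : (m:ℝ) ^ (-δ) ≤ (if 0 < i0 then (U.1 (i0 - 1, j0) : ℝ) ^ (-δ) else 1) := by
          split_ifs with h
          · have hle : U.1 (i0 - 1, j0) ≤ m := by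
              have : (if 0 < i0 then U.1 (i0 - 1, j0) + 1 else 1) ≤ low U.1 := le_max_right _ _
              rw [if_pos h] at this
              omega
            have hpos : 0 < U.1 (i0 - 1, j0) := by
              apply U.2.1
              rw [hμne (i0 - 1) (by omega)]
              have := hanti (show i0 - 1 ≤ i0 by omega)
              omega
            exact Real.rpow_le_rpow_of_nonpos (by exact_mod_cast hpos) (by exact_mod_cast hle)
              (by linarith)
          · exact Real.rpow_le_one_of_one_le_of_nonpos hmR (by linarith)
        have hrceq : -(r c) = -(1 + 2*δ) + (-δ + -δ) := by rw [hδdef]; ring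
        rw [hrceq, Real.rpow_add hmpos, Real.rpow_add hmpos, hQP U]
        have hmd0 : (0:ℝ) ≤ (m:ℝ) ^ (-δ) := Real.rpow_nonneg (le_of_lt hmpos) _
        have hl0 : (0:ℝ) ≤ (if 0 < j0 then (U.1 (i0, j0 - 1) : ℝ) ^ (-δ) else 1) := by
          split_ifs
          · exact Real.rpow_nonneg (Nat.cast_nonneg _) _
          · exact zero_le_one
        have hprod : (m:ℝ) ^ (-δ) * (m:ℝ) ^ (-δ) ≤
            (if 0 < j0 then (U.1 (i0, j0 - 1) : ℝ) ^ (-δ) else 1) *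
            (if 0 < i0 then (U.1 (i0 - 1, j0) : ℝ) ^ (-δ) else 1) :=
          mul_le_mul hl hu hmd0 hl0
        have hAP : (0:ℝ) ≤ (m:ℝ) ^ (-(1 + 2*δ)) * P U.1 :=
          mul_nonneg (Real.rpow_nonneg (le_of_lt hmpos) _) (hPnonneg _)
        calc (m:ℝ) ^ (-(1 + 2*δ)) * ((m:ℝ) ^ (-δ) * (m:ℝ) ^ (-δ)) * P U.1
            = ((m:ℝ) ^ (-(1 + 2*δ)) * P U.1) * ((m:ℝ) ^ (-δ) * (m:ℝ) ^ (-δ)) := by ring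
          _ ≤ ((m:ℝ) ^ (-(1 + 2*δ)) * P U.1) *
              ((if 0 < j0 then (U.1 (i0, j0 - 1) : ℝ) ^ (-δ) else 1) *
               (if 0 < i0 then (U.1 (i0 - 1, j0) : ℝ) ^ (-δ) else 1)) :=
            mul_le_mul_of_nonneg_left hprod hAP
          _ = (m:ℝ) ^ (-(1 + 2*δ)) * (P U.1 *
              ((if 0 < j0 then (U.1 (i0, j0 - 1) : ℝ) ^ (-δ) else 1) *
               (if 0 < i0 then (U.1 (i0 - 1, j0) : ℝ) ^ (-δ) else 1))) := by ring
      · rw [zero_mul]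
        exact mul_nonneg (Real.rpow_nonneg (Nat.cast_nonneg _) _) (hQnonneg _)
    -- fiberwise summability
    have hZ : Summable (fun m : ℕ => (m:ℝ) ^ (-(1 + 2*δ))) :=
      Real.summable_nat_rpow.2 (by linarith)
    have hZc : Summable (fun m : ℕ => (m:ℝ) ^ (-(r c))) :=
      Real.summable_nat_rpow.2 (by linarith)
    have hfib : ∀ U : {T : ℕ × ℕ → ℕ // IsSSYT μ T}, Summable (fun m : ℕ => g (U, m)) := by
      intro U
      apply Summable.of_nonneg_of_le (fun m => hgnonneg (U, m))
        (fun m => ?_) (hZc.mul_right (P U.1))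
      rw [hgdef]
      dsimp only
      split_ifs
      · exact le_refl _
      · rw [zero_mul]
        exact mul_nonneg (Real.rpow_nonneg (Nat.cast_nonneg _) _) (hPnonneg _)
    -- summability of g
    have hsummg : Summable g := by
      apply (summable_prod_of_nonneg (fun Um => hgnonneg Um)).2
      refine ⟨hfib, ?_⟩
      apply Summable.of_nonneg_of_le (fun U => tsum_nonneg fun m => hgnonneg (U, m))
        (fun U => ?_) ((ih μ hμanti hμL hμsum r' h1' h2').mul_left
          (∑' m : ℕ, (m:ℝ) ^ (-(1 + 2*δ))))
      calc (∑' m : ℕ, g (U, m)) ≤ ∑' m : ℕ, (m:ℝ) ^ (-(1 + 2*δ)) * Q U.1 :=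
            Summable.tsum_le_tsum (fun m => hterm U m) (hfib U) (hZ.mul_right _)
        _ = (∑' m : ℕ, (m:ℝ) ^ (-(1 + 2*δ))) * Q U.1 := tsum_mul_right
    exact (summable_congr hfg).2 (hsummg.comp_injective hφinj)

/-- Absolute convergence of the Schur multiple zeta series (Nakasuji–
Phuksuwan–Yamasaki, Lemma 2.1): if `Re(s_{ij}) ≥ 1` for every cell of the
partition `λ` and `Re(s_{ij}) > 1` for every corner cell (a cell `(i,j) ∈ λ`
with `(i+1,j) ∉ λ` and `(i,j+1) ∉ λ`), then
`Σ_{M ∈ SSYT(λ)} ∏ m_{ij}^{−s_{ij}}` converges absolutely. -/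
theorem schur_zeta_summable
    (lam : ℕ → ℕ) (L : ℕ)
    (hanti : Antitone lam) (hL : ∀ i, L ≤ i → lam i = 0)
    (s : ℕ × ℕ → ℂ)
    (h1 : ∀ i j, j < lam i → 1 ≤ (s (i, j)).re)
    (h2 : ∀ i j, j < lam i → lam (i + 1) ≤ j → lam i ≤ j + 1 → 1 < (s (i, j)).re) :
    Summable (fun T : {T : ℕ × ℕ → ℕ // IsSSYT lam T} =>
      ‖∏ c ∈ cellFinset lam L, ((T.1 c : ℕ) : ℂ) ^ (-(s c))‖) := by
  have hkey := key L (∑ i ∈ Finset.range L, lam i) lam hanti hL rfl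
    (fun c => (s c).re) h1 h2
  apply (summable_congr ?_).1 hkey
  intro T
  rw [norm_prod]
  apply Finset.prod_congr rfl
  intro x hx
  rw [mem_cellFinset hanti] at hx
  have hpos : 0 < T.1 x := by
    have := T.2.1 x.1 x.2 hx.2
    rwa [Prod.mk.eta] at this
  have hcast : ((T.1 x : ℕ) : ℂ) = ((T.1 x : ℝ) : ℂ) := by push_cast; rfl
  rw [hcast,
    Complex.norm_cpow_eq_rpow_re_of_pos (by exact_mod_cast hpos), Complex.neg_re]
end

section
/- Let r ≥ 1 and (s_1,…,s_r) ∈ ℂ^r satisfy Σ_{j=r−i+1}^{r} Re(s_j) > i for every 1 ≤ i ≤ r. Then both series ζ(s_1,…,s_r) = Σ_{0<m_1<⋯<m_r} m_1^{-s_1}⋯m_r^{-s_r} and ζ*(s_1,…,s_r) = Σ_{0<m_1≤⋯≤m_r} m_1^{-s_1}⋯m_r^{-s_r} converge absolutely. -/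
set_option maxHeartbeats 1000000

open Finset

/-- Telescoping identity for products of rpow's. -/
private lemma ez_tele (f D : ℕ → ℝ) (hf : ∀ i, 0 < f i) (n : ℕ) :
    ∏ i ∈ Finset.range n, f i ^ (D i - D (i + 1)) =
      (∏ i ∈ Finset.range n, (f i / (if i = 0 then 1 else f (i - 1))) ^ D i) *
        (if n = 0 then 1 else f (n - 1)) ^ (-(D n)) := by
  induction n with
  | zero => simp
  | succ n ih =>
    rw [Finset.prod_range_succ, ih, Finset.prod_range_succ]
    have hg : (0 : ℝ) < (if n = 0 then 1 else f (n - 1)) := by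
      split <;> [norm_num; exact hf _]
    simp only [Nat.succ_ne_zero, if_false, Nat.add_sub_cancel]
    rw [Real.rpow_sub (hf n), Real.div_rpow (hf n).le hg.le, Real.rpow_neg hg.le,
      Real.rpow_neg (hf n).le]
    have h1 : (if n = 0 then (1:ℝ) else f (n - 1)) ^ D n ≠ 0 :=
      ne_of_gt (Real.rpow_pos_of_pos hg _)
    have h2 : f n ^ D (n + 1) ≠ 0 := ne_of_gt (Real.rpow_pos_of_pos (hf n) _)
    field_simp

/-- Summability of products of `rpow`s over tuples of positive naturals. -/
private lemma ez_summable_pi (n : ℕ) (c : ℝ) (hc : 1 < c) :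
    Summable (fun m : Fin n → ℕ+ => ∏ i, ((m i : ℕ) : ℝ) ^ (-c)) := by
  induction n with
  | zero =>
    haveI : Subsingleton (Fin 0 → ℕ+) := ⟨fun f g => funext fun i => i.elim0⟩
    haveI : Fintype (Fin 0 → ℕ+) := Fintype.ofSubsingleton (fun i => i.elim0)
    exact (hasSum_fintype _).summable
  | succ n ih =>
    have base : Summable (fun k : ℕ+ => ((k : ℕ) : ℝ) ^ (-c)) := by
      have hs : Summable (fun k : ℕ => (k : ℝ) ^ (-c)) :=
        Real.summable_nat_rpow.2 (by linarith)
      exact hs.comp_injective (fun a b hab => PNat.coe_injective hab)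
    have hb' : (0 : ℕ+ → ℝ) ≤ fun k : ℕ+ => ((k : ℕ) : ℝ) ^ (-c) := by
      intro k
      positivity
    have hi' : (0 : (Fin n → ℕ+) → ℝ) ≤ fun m : Fin n → ℕ+ =>
        ∏ i, ((m i : ℕ) : ℝ) ^ (-c) := by
      intro m
      exact Finset.prod_nonneg fun i _ => Real.rpow_nonneg (by positivity) _
    have hmul := Summable.mul_of_nonneg base ih hb' hi'
    have hcomp := hmul.comp_injective (Fin.consEquiv (fun _ : Fin (n + 1) => ℕ+)).symm.injective
    refine hcomp.congr fun m => ?_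
    simp only [Function.comp_apply]
    rw [Fin.prod_univ_succ]
    rfl

/-- Absolute convergence of the Euler–Zagier multiple zeta-function
`ζ(s₁,…,s_r) = Σ_{0<m₁<⋯<m_r} m₁^{-s₁}⋯m_r^{-s_r}` and of its star-variant
`ζ*(s₁,…,s_r) = Σ_{0<m₁≤⋯≤m_r} m₁^{-s₁}⋯m_r^{-s_r}` in the region
`Σ_{j=r−i+1}^{r} Re(s_j) > i` for `1 ≤ i ≤ r` (Matsumoto).
Here the condition is stated `0`-based: for each `k : Fin r`, the sum of the
last `r − k` real parts exceeds `r − k`. -/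
theorem euler_zagier_summable
    (r : ℕ) (hr : 1 ≤ r) (s : Fin r → ℂ)
    (h : ∀ k : Fin r, ((r - (k : ℕ) : ℕ) : ℝ) < ∑ j ∈ Finset.Ici k, (s j).re) :
    Summable (fun m : {m : Fin r → ℕ+ // StrictMono m} =>
      ‖∏ i, ((m.1 i : ℕ) : ℂ) ^ (-(s i))‖) ∧
    Summable (fun m : {m : Fin r → ℕ+ // Monotone m} =>
      ‖∏ i, ((m.1 i : ℕ) : ℂ) ^ (-(s i))‖) := by
  set σ : Fin r → ℝ := fun i => (s i).re with hσ
  have hne : (Finset.univ : Finset (Fin r)).Nonempty := ⟨⟨0, hr⟩, Finset.mem_univ _⟩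
  set ε : ℝ := Finset.univ.inf' hne
      (fun i => (∑ j ∈ Finset.Ici i, σ j) - ((r - (i : ℕ) : ℕ) : ℝ)) with hεdef
  have hε : 0 < ε := by
    rw [hεdef, Finset.lt_inf'_iff]
    intro i _
    have := h i
    simp only [hσ]
    linarith
  set δ : ℝ := ε / r with hδdef
  have hrpos : (0 : ℝ) < r := by exact_mod_cast hr
  have hδ : 0 < δ := div_pos hε hrpos
  set c : ℝ := 1 + δ with hcdef
  have hc : 1 < c := by rw [hcdef]; linarith
  -- key pointwise bound
  have key : ∀ m : Fin r → ℕ+, Monotone m →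
      ‖∏ i, ((m i : ℕ) : ℂ) ^ (-(s i))‖ ≤ ∏ i, ((m i : ℕ) : ℝ) ^ (-c) := by
    intro m hm
    set v : Fin r → ℝ := fun i => ((m i : ℕ) : ℝ) with hvdef
    have hv1 : ∀ i, 1 ≤ v i := fun i => by
      simp only [hvdef]; exact_mod_cast (m i).one_le
    have hv0 : ∀ i, 0 < v i := fun i => lt_of_lt_of_le one_pos (hv1 i)
    have hnorm : ‖∏ i, ((m i : ℕ) : ℂ) ^ (-(s i))‖ = ∏ i, v i ^ (-(σ i)) := by
      rw [norm_prod]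
      refine Finset.prod_congr rfl fun i _ => ?_
      rw [Complex.norm_natCast_cpow_of_pos (m i).pos]
      simp [hσ, hvdef]
    rw [hnorm]
    have hsplit : ∀ i : Fin r, v i ^ (-(σ i)) = v i ^ (-c) * v i ^ (c - σ i) := by
      intro i
      rw [← Real.rpow_add (hv0 i)]
      ring_nf
    calc ∏ i, v i ^ (-(σ i)) = (∏ i, v i ^ (-c)) * ∏ i, v i ^ (c - σ i) := by
          rw [← Finset.prod_mul_distrib]
          exact Finset.prod_congr rfl fun i _ => hsplit i
      _ ≤ ∏ i, v i ^ (-c) := by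
          apply mul_le_of_le_one_right
          · exact Finset.prod_nonneg fun i _ => Real.rpow_nonneg (hv0 i).le _
          -- main step: ∏ v i ^ (c - σ i) ≤ 1
          set V : ℕ → ℝ := fun k => v ⟨min k (r - 1), by omega⟩ with hVdef
          set D : ℕ → ℝ := fun k =>
            ∑ j ∈ Finset.univ.filter (fun j : Fin r => k ≤ (j : ℕ)), (c - σ j) with hDdef
          have hV0 : ∀ k, 0 < V k := fun k => hv0 _
          have hV1 : ∀ k, 1 ≤ V k := fun k => hv1 _
          have hVmono : ∀ k l, k ≤ l → V k ≤ V l := by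
            intro k l hkl
            simp only [hVdef, hvdef]
            have : m ⟨min k (r - 1), by omega⟩ ≤ m ⟨min l (r - 1), by omega⟩ :=
              hm (by simp only [Fin.mk_le_mk]; omega)
            exact_mod_cast this
          have hfilter : ∀ k (hk : k < r),
              Finset.univ.filter (fun j : Fin r => k ≤ (j : ℕ)) = Finset.Ici ⟨k, hk⟩ := by
            intro k hk
            ext j
            simp [Fin.le_def]
          have hDr : D r = 0 := by
            simp only [hDdef]
            have hemp : Finset.univ.filter (fun j : Fin r => r ≤ (j : ℕ)) = ∅ := by
              ext j
              simp only [Finset.mem_filter, Finset.mem_univ, true_and,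
                Finset.notMem_empty, iff_false]
              exact not_le_of_gt j.isLt
            rw [hemp, Finset.sum_empty]
          have hDle : ∀ k, k < r → D k ≤ 0 := by
            intro k hk
            simp only [hDdef]
            rw [hfilter k hk, Finset.sum_sub_distrib, Finset.sum_const, Fin.card_Ici]
            have h1 : ε ≤ (∑ j ∈ Finset.Ici (⟨k, hk⟩ : Fin r), σ j) - ((r - k : ℕ) : ℝ) :=
              Finset.inf'_le _ (Finset.mem_univ (⟨k, hk⟩ : Fin r))
            have h2 : ((r - k : ℕ) : ℝ) ≤ (r : ℝ) := by
              have : (r - k : ℕ) ≤ r := Nat.sub_le _ _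
              exact_mod_cast this
            have h3 : ((r - k : ℕ) : ℝ) * δ ≤ ε := by
              calc ((r - k : ℕ) : ℝ) * δ ≤ (r : ℝ) * δ :=
                    mul_le_mul_of_nonneg_right h2 hδ.le
                _ = ε := by rw [hδdef]; field_simp
            have h4 : (0:ℝ) ≤ ((r - k : ℕ) : ℝ) := by positivity
            rw [nsmul_eq_mul]
            rw [hcdef]
            nlinarith [h1, h3]
          have hDstep : ∀ k (hk : k < r), D k - D (k + 1) = c - σ ⟨k, hk⟩ := by
            intro k hk
            simp only [hDdef]
            have hins : Finset.univ.filter (fun j : Fin r => k ≤ (j : ℕ)) =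
                insert (⟨k, hk⟩ : Fin r)
                  (Finset.univ.filter (fun j : Fin r => k + 1 ≤ (j : ℕ))) := by
              ext j
              simp only [Finset.mem_filter, Finset.mem_univ, true_and, Finset.mem_insert,
                Fin.ext_iff]
              omega
            rw [hins, Finset.sum_insert (by simp)]
            ring
          have hprodeq : ∏ i, v i ^ (c - σ i) =
              ∏ k ∈ Finset.range r, V k ^ (D k - D (k + 1)) := by
            rw [← Fin.prod_univ_eq_prod_range (fun k => V k ^ (D k - D (k + 1))) r]
            refine Finset.prod_congr rfl fun i _ => ?_
            have h1 : V (i : ℕ) = v i := by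
              simp only [hVdef]
              congr 1
              apply Fin.ext
              have := i.isLt
              simp only [Fin.val_mk]
              omega
            rw [hDstep (i : ℕ) i.isLt, h1]
          rw [hprodeq, ez_tele V D hV0 r, hDr, neg_zero, Real.rpow_zero, mul_one]
          apply Finset.prod_le_one
          · intro k _
            positivity
          · intro k hk
            rw [Finset.mem_range] at hk
            have hgpos : (0:ℝ) < (if k = 0 then 1 else V (k - 1)) := by
              split <;> [norm_num; exact hV0 _]
            have hgle : (if k = 0 then (1:ℝ) else V (k - 1)) ≤ V k := by
              split
              · exact hV1 _
              · exact hVmono _ _ (Nat.sub_le k 1)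
            exact Real.rpow_le_one_of_one_le_of_nonpos
              ((one_le_div hgpos).2 hgle) (hDle k hk)
  have hsum : Summable (fun m : Fin r → ℕ+ => ∏ i, ((m i : ℕ) : ℝ) ^ (-c)) :=
    ez_summable_pi r c hc
  constructor
  · exact Summable.of_nonneg_of_le (fun m => norm_nonneg _)
      (fun m => key m.1 m.2.monotone) (hsum.comp_injective Subtype.val_injective)
  · exact Summable.of_nonneg_of_le (fun m => norm_nonneg _)
      (fun m => key m.1 m.2) (hsum.comp_injective Subtype.val_injective)
end
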